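/- arXiv:2111.12387 — 2 statements merged into one kernel-verified Lean document; each statement's English description precedes it below -/
import Mathlib

section
/- Let D = (V, A) be a directed acyclic graph. The acyclic reorientation poset AR(D) is a distributive lattice (a lattice satisfying x ∨ (y ∧ z) = (x ∨ y) ∧ (x ∨ z) for all x, y, z) if and only if the underlying undirected graph of D is a forest (equivalently, in that case AR(D) is the boolean lattice of all subsets of A). -/
def ArcRel {V : Type*} (E : Set (V × V)) : V → V → Prop := fun x y => (x, y) ∈ E

/-- `E` has no directed cycle. -/
def AcyclicArcs {V : Type*} (E : Set (V × V)) : Prop :=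
  ∀ v : V, ¬ Relation.TransGen (ArcRel E) v v

/-- `A` is the arc set of a directed acyclic graph: arcs join distinct vertices,
at most one direction between two vertices, and no directed cycle. -/
def IsDAG {V : Type*} (A : Set (V × V)) : Prop :=
  (∀ a ∈ A, a.1 ≠ a.2) ∧ (∀ a ∈ A, Prod.swap a ∉ A) ∧ AcyclicArcs A

/-- Arc set of the reorientation of `A` where exactly the arcs of `B` are reversed. -/
def reorient {V : Type*} (A B : Set (V × V)) : Set (V × V) :=
  (A \ B) ∪ (Prod.swap '' B)

/-- `B` encodes an acyclic reorientation of `A`. -/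
def ARmem {V : Type*} (A B : Set (V × V)) : Prop :=
  B ⊆ A ∧ AcyclicArcs (reorient A B)

/-- The acyclic reorientation poset of `A`, ordered by inclusion of reversed sets. -/
abbrev ARP {V : Type*} (A : Set (V × V)) := {B : Set (V × V) // ARmem A B}

/-- Underlying undirected graph of an arc set. -/
def undirectedGraph {V : Type*} (E : Set (V × V)) : SimpleGraph V :=
  SimpleGraph.fromRel (fun x y => (x, y) ∈ E)

/-- A directed graph is a forest if its underlying undirected graph has no cycle. -/
def IsForestArcs {V : Type*} (E : Set (V × V)) : Prop :=
  (undirectedGraph E).IsAcyclic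

/-!
If the underlying graph is a forest, no set of reversed arcs creates a directed cycle, so `AR(D)`
is the Boolean lattice of subsets of `A`. Otherwise, reversing the arcs that a cycle of the
underlying graph traverses backwards creates a directed cycle; distributivity, used in the form
"`y ⊓ z ≤ x` and `y ≤ x ⊔ z` imply `y ≤ x`", rules this out. If a single arc `(u, v)` cannot be
reversed, there is a detour `u → m ⇝ v`, and orientations by vertex rankings give
`X < Y = X ∪ {(u, v)}` and `Z` violating the rule; otherwise a minimal non-acyclic set of reversed
arcs violates it together with an atom.
-/

theorem Relation.ReflTransGen.avoiding_or {α : Type*} {r : α → α → Prop} {a b x y : α}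
    (h : Relation.ReflTransGen r x y) :
    Relation.ReflTransGen (fun s t => r s t ∧ (s, t) ≠ (a, b)) x y ∨
      Relation.ReflTransGen (fun s t => r s t ∧ (s, t) ≠ (a, b)) b y := by
  induction h using Relation.ReflTransGen.head_induction_on with
  | refl => exact Or.inl .refl
  | head hxz _ ih =>
    rename_i x z _
    by_cases hx : (x, z) = (a, b)
    · obtain ⟨-, rfl⟩ := Prod.mk.inj hx
      exact Or.inr (ih.elim id id)
    · exact ih.imp (.head ⟨hxz, hx⟩) id

theorem transGen_arcRel_union_singleton {V : Type*} {E : Set (V × V)} {x y s t : V}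
    (h : Relation.TransGen (ArcRel (E ∪ {(x, y)})) s t) :
    Relation.TransGen (ArcRel E) s t ∨
      Relation.ReflTransGen (ArcRel E) s x ∧ Relation.ReflTransGen (ArcRel E) y t := by
  induction h with
  | single h =>
    rcases h with h | h
    · exact Or.inl (.single h)
    · obtain ⟨rfl, rfl⟩ := Prod.mk.inj h
      exact Or.inr ⟨.refl, .refl⟩
  | tail _ h ih =>
    rcases h with h | h
    · exact ih.imp (·.tail h) (And.imp_right (·.tail h))
    · obtain ⟨rfl, rfl⟩ := Prod.mk.inj h
      exact Or.inr ⟨ih.elim (·.to_reflTransGen) And.left, .refl⟩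

theorem SimpleGraph.Walk.reflTransGen_of_forall_dart {V : Type*} {G : SimpleGraph V} {r : V → V → Prop} :
    ∀ {x y : V} (p : G.Walk x y), (∀ d ∈ p.darts, r d.fst d.snd) → Relation.ReflTransGen r x y
  | _, _, .nil, _ => .refl
  | _, _, .cons _ p, hr => .head (hr _ List.mem_cons_self)
    (p.reflTransGen_of_forall_dart fun d hd => hr d (List.mem_cons_of_mem _ hd))

def IsDistribLatticeOrder (P : Type*) [PartialOrder P] : Prop :=
  (∀ x y : P, ∃ z, IsLUB {x, y} z) ∧ (∀ x y : P, ∃ z, IsGLB {x, y} z) ∧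
    ∀ x y z yz xyz xy xz : P, IsGLB {y, z} yz → IsLUB {x, yz} xyz →
      IsLUB {x, y} xy → IsLUB {x, z} xz → IsGLB {xy, xz} xyz

namespace IsDistribLatticeOrder

variable {P : Type*} [PartialOrder P]

theorem of_distribLattice {L : Type*} [DistribLattice L] : IsDistribLatticeOrder L := by
  refine ⟨fun x y => ⟨_, isLUB_pair⟩, fun x y => ⟨_, isGLB_pair⟩, ?_⟩
  intro x y z yz xyz xy xz hyz hxyz hxy hxz
  obtain rfl := hyz.unique isGLB_pair
  obtain rfl := hxyz.unique isLUB_pair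
  obtain rfl := hxy.unique isLUB_pair
  obtain rfl := hxz.unique isLUB_pair
  rw [sup_inf_left]
  exact isGLB_pair

/-- In a distributive lattice, `y = y ⊓ (x ⊔ z) = (y ⊓ x) ⊔ (y ⊓ z) ≤ x`. -/
theorem le_of_lowerBounds_le_of_le_sup (hP : IsDistribLatticeOrder P) {x y z xz : P}
    (hyz : ∀ l, l ≤ y → l ≤ z → l ≤ x) (hxz : IsLUB {x, z} xz) (hy : y ≤ xz) : y ≤ x := by
  obtain ⟨hsup, hinf, hdistrib⟩ := hP
  obtain ⟨yz, hyz'⟩ := hinf y z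
  obtain ⟨xy, hxy⟩ := hsup x y
  have hyzx : yz ≤ x := hyz yz (hyz'.1 (by simp)) (hyz'.1 (by simp))
  have hx : IsLUB {x, yz} x := ⟨by simp [hyzx], fun u hu => hu (by simp)⟩
  have hyxy : y ≤ xy := hxy.1 (by simp)
  exact (hdistrib x y z yz x xy xz hyz' hx hxy hxz).2 (by simp [hyxy, hy])

end IsDistribLatticeOrder

section Reorientation

variable {V : Type*} {A B C : Set (V × V)}

theorem arcRel_reorient {x y : V} :
    ArcRel (reorient A B) x y ↔ (x, y) ∈ A ∧ (x, y) ∉ B ∨ (y, x) ∈ B := by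
  simp [ArcRel, reorient]

theorem armem_empty (hA : AcyclicArcs A) : ARmem A ∅ :=
  ⟨Set.empty_subset A, by simpa [reorient] using hA⟩

theorem armem_self (hA : AcyclicArcs A) : ARmem A A := by
  refine ⟨subset_rfl, fun v hv => hA v (Relation.TransGen.swap _ _ ?_)⟩
  refine Relation.TransGen.mono (fun x y h => ?_) _ _ hv
  show (y, x) ∈ A
  simpa using arcRel_reorient.1 h

def lexReversal {α : Type*} [LinearOrder α] (A C : Set (V × V)) (r : V → α) : Set (V × V) :=
  {p ∈ A | r p.2 < r p.1 ∨ r p.1 = r p.2 ∧ p ∈ C}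

theorem armem_lexReversal {α : Type*} [LinearOrder α] (hC : ARmem A C) (r : V → α) :
    ARmem A (lexReversal A C r) := by
  refine ⟨fun p hp => hp.1, fun v hv => ?_⟩
  have hstep : ∀ x y, ArcRel (reorient A (lexReversal A C r)) x y →
      r x < r y ∨ r x = r y ∧ ArcRel (reorient A C) x y := by
    intro x y hxy
    rcases arcRel_reorient.1 hxy with ⟨hA, hL⟩ | ⟨hA, hL⟩
    · simp only [lexReversal, Set.mem_ofPred_eq, not_and, not_or] at hL
      rcases (not_lt.1 (hL hA).1).lt_or_eq with h | h
      · exact Or.inl h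
      · exact Or.inr ⟨h, arcRel_reorient.2 (Or.inl ⟨hA, (hL hA).2 h⟩)⟩
    · rcases hL with h | ⟨h, hC⟩
      · exact Or.inl h
      · exact Or.inr ⟨h.symm, arcRel_reorient.2 (Or.inr hC)⟩
  have hpath : ∀ x y, Relation.TransGen (ArcRel (reorient A (lexReversal A C r))) x y →
      r x < r y ∨ r x = r y ∧ Relation.TransGen (ArcRel (reorient A C)) x y := by
    intro x y hxy
    induction hxy with
    | single h => exact (hstep _ _ h).imp id (And.imp_right .single)
    | tail _ h ih =>
      rcases ih, hstep _ _ h with ⟨h₁ | ⟨h₁, h₁'⟩, h₂ | ⟨h₂, h₂'⟩⟩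
      · exact Or.inl (h₁.trans h₂)
      · exact Or.inl (h₂ ▸ h₁)
      · exact Or.inl (h₁ ▸ h₂)
      · exact Or.inr ⟨h₁.trans h₂, h₁'.tail h₂'⟩
  rcases hpath v v hv with h | ⟨-, h⟩
  · exact lt_irrefl _ h
  · exact hC.2 v h

end Reorientation

section Detour

variable {V : Type*} {A : Set (V × V)}

theorem exists_detour_of_not_acyclicArcs_reorient_singleton (hA : IsDAG A) {u v : V}
    (huv : (u, v) ∈ A) (h : ¬ AcyclicArcs (reorient A {(u, v)})) :
    ∃ m, (u, m) ∈ A ∧ m ≠ v ∧ Relation.ReflTransGen (ArcRel A) m v := by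
  obtain ⟨w, hw⟩ : ∃ w, Relation.TransGen (ArcRel (A \ {(u, v)} ∪ {(v, u)})) w w := by
    simpa [AcyclicArcs, reorient] using h
  have hsub : ArcRel (A \ {(u, v)}) ≤ ArcRel A := fun _ _ h => h.1
  rcases transGen_arcRel_union_singleton hw with hcyc | ⟨hwv, huw⟩
  · exact absurd (Relation.TransGen.mono hsub _ _ hcyc) (hA.2.2 w)
  · rcases (huw.trans hwv).cases_head with rfl | ⟨m, hum, hmv⟩
    · exact absurd rfl (hA.1 _ huv)
    · refine ⟨m, hum.1, ?_, Relation.ReflTransGen.mono hsub _ _ hmv⟩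
      rintro rfl
      exact hum.2 rfl

/-- Were `(u, v)` kept, the reversed path `v ⇝ m` would close the cycle `u → v ⇝ m → u`. -/
theorem mem_of_detour_reversed (hA : AcyclicArcs A) {u v m : V} (huv : (u, v) ∈ A)
    (hum : (u, m) ∈ A) (hmv : Relation.ReflTransGen (ArcRel A) m v) {U : Set (V × V)}
    (hU : AcyclicArcs (reorient A U)) (humU : (u, m) ∈ U) (hU' : ∀ p ∈ A, p.1 ≠ u → p ∈ U) :
    (u, v) ∈ U := by
  by_contra hb
  have hback : ∀ x, Relation.ReflTransGen (ArcRel A) m x →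
      Relation.ReflTransGen (ArcRel (reorient A U)) x m := by
    intro x hx
    induction hx with
    | refl => exact .refl
    | tail hmx hxy ih =>
      rename_i x y
      have hxu : x ≠ u := by
        rintro rfl
        exact hA x (.head' hum hmx)
      exact .head (arcRel_reorient.2 (Or.inr (hU' _ hxy hxu))) ih
  exact hU u (.head' (arcRel_reorient.2 (Or.inl ⟨huv, hb⟩))
    ((hback v hmv).tail (arcRel_reorient.2 (Or.inr humU))))

/-- Rank `m` first, then `u` and `v` together, then the rest: `X` and `Y` differ only on the tie
`(u, v)`, and `Z` reverses exactly the arcs not leaving `u`. Thus `Y ⊓ Z ≤ X`, and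
`Y ≤ X ⊔ Z` by `mem_of_detour_reversed`. -/
theorem not_isDistribLatticeOrder_of_detour (hA : IsDAG A) {u v m : V} (huv : (u, v) ∈ A)
    (hum : (u, m) ∈ A) (hmv : m ≠ v) (hpath : Relation.ReflTransGen (ArcRel A) m v) :
    ¬ IsDistribLatticeOrder (ARP A) := by
  classical
  intro hD
  have hu : u ≠ v := hA.1 _ huv
  have hum' : u ≠ m := hA.1 _ hum
  let r : V → ℕ := fun x => if x = m then 0 else if x = u ∨ x = v then 1 else 2
  let X : ARP A := ⟨lexReversal A ∅ r, armem_lexReversal (armem_empty hA.2.2) r⟩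
  let Y : ARP A := ⟨lexReversal A (lexReversal A ∅ fun x => if x = v then 0 else 1) r,
    armem_lexReversal (armem_lexReversal (armem_empty hA.2.2) _) r⟩
  let Z : ARP A := ⟨lexReversal A A fun x => if x = u then 0 else 1,
    armem_lexReversal (armem_self hA.2.2) _⟩
  have hbX : (u, v) ∉ X.1 := by simp [X, lexReversal, r, hu, hum', hmv.symm]
  have hbY : (u, v) ∈ Y.1 := by simp [Y, lexReversal, r, hu, hum', huv, hmv.symm]
  have hbZ : (u, v) ∉ Z.1 := by simp [Z, lexReversal, hu.symm]
  have hmX : (u, m) ∈ X.1 := by simp [X, lexReversal, r, hum, hum']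
  have hYX : Y.1 ⊆ insert (u, v) X.1 := by
    rintro ⟨x, y⟩ hxy
    rcases hxy with ⟨hxyA, hlt | ⟨htie, -, hv | ⟨-, ⟨⟩⟩⟩⟩
    · exact Or.inr ⟨hxyA, Or.inl hlt⟩
    · simp only [r] at hv htie
      split_ifs at hv htie <;> simp_all
  obtain ⟨XZ, hXZ⟩ := hD.1 X Z
  have hXXZ : X ≤ XZ := hXZ.1 (by simp)
  have hZXZ : Z ≤ XZ := hXZ.1 (by simp)
  have hYXZ : Y ≤ XZ := by
    have hbXZ : (u, v) ∈ XZ.1 :=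
      mem_of_detour_reversed hA.2.2 huv hum hpath XZ.2.2 (hXXZ hmX)
        fun p hp hpu => hZXZ (by simp [Z, lexReversal, hp, hpu, em])
    intro p hp
    rcases hYX hp with rfl | h
    exacts [hbXZ, hXXZ h]
  refine hbX (hD.le_of_lowerBounds_le_of_le_sup (z := Z) ?_ hXZ hYXZ hbY)
  intro L hLY hLZ p hp
  rcases hYX (hLY hp) with rfl | h
  · exact absurd (hLZ hp) hbZ
  · exact h

end Detour

namespace IsDistribLatticeOrder

variable {V : Type*} {A : Set (V × V)}

theorem acyclicArcs_reorient_singleton (hD : IsDistribLatticeOrder (ARP A)) (hA : IsDAG A)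
    {a : V × V} (ha : a ∈ A) : AcyclicArcs (reorient A {a}) := by
  by_contra h
  obtain ⟨m, hum, hmv, hpath⟩ := exists_detour_of_not_acyclicArcs_reorient_singleton hA ha h
  exact not_isDistribLatticeOrder_of_detour hA ha hum hmv hpath hD

/-- Take `B` minimal among the subsets of `A` whose reversal creates a cycle, and two arcs
`b₁ ≠ b₂` of `B`. The join `J` of the acyclic reorientations `B \ {b₁}` and `B \ {b₂}` contains
`B`, so it has an arc `a ∉ B`; distributivity would put the atom `{a} ≤ J` below `B \ {b₁}`. -/
theorem acyclicArcs_reorient [Finite V] (hD : IsDistribLatticeOrder (ARP A)) (hA : IsDAG A)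
    {B : Set (V × V)} (hB : B ⊆ A) : AcyclicArcs (reorient A B) := by
  by_contra hBcyc
  obtain ⟨B, ⟨hBA, hBcyc⟩, hmin⟩ := exists_minimal_of_wellFoundedLT
    (fun B : Set (V × V) => B ⊆ A ∧ ¬ AcyclicArcs (reorient A B)) ⟨B, hB, hBcyc⟩
  have hdiff : ∀ b ∈ B, ARmem A (B \ {b}) := fun b hb =>
    ⟨Set.sdiff_subset.trans hBA, by_contra fun h =>
      (hmin ⟨Set.sdiff_subset.trans hBA, h⟩ Set.sdiff_subset hb).2 rfl⟩
  obtain ⟨b₁, hb₁⟩ : B.Nonempty := Set.nonempty_iff_ne_empty.2 <| by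
    rintro rfl
    exact hBcyc (armem_empty hA.2.2).2
  obtain ⟨b₂, hb₂, hne⟩ : ∃ b₂ ∈ B, b₂ ≠ b₁ := by
    by_contra! h
    rw [Set.eq_singleton_iff_unique_mem.2 ⟨hb₁, h⟩] at hBcyc
    exact hBcyc (hD.acyclicArcs_reorient_singleton hA (hBA hb₁))
  let Y : ARP A := ⟨B \ {b₁}, hdiff b₁ hb₁⟩
  let Z : ARP A := ⟨B \ {b₂}, hdiff b₂ hb₂⟩
  obtain ⟨J, hJ⟩ := hD.1 Y Z
  have hBJ : B ⊆ J.1 := by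
    intro p hp
    by_cases hp₁ : p = b₁
    · exact (hJ.1 (by simp) : Z ≤ J) ⟨hp, by rintro rfl; exact hne hp₁⟩
    · exact (hJ.1 (by simp) : Y ≤ J) ⟨hp, hp₁⟩
  obtain ⟨a, haJ, haB⟩ : ∃ a ∈ J.1, a ∉ B := by
    by_contra! h
    exact hBcyc (Set.Subset.antisymm h hBJ ▸ J.2.2)
  let X : ARP A := ⟨{a}, Set.singleton_subset_iff.2 (J.2.1 haJ),
    hD.acyclicArcs_reorient_singleton hA (J.2.1 haJ)⟩
  have hXY : X ≤ Y := by
    refine hD.le_of_lowerBounds_le_of_le_sup (z := Z) ?_ hJ (Set.singleton_subset_iff.2 haJ)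
    intro L hLX hLZ p hp
    obtain rfl : p = a := hLX hp
    exact absurd (hLZ hp).1 haB
  exact haB (hXY rfl).1

end IsDistribLatticeOrder

section Forest

variable {V : Type*} {A B : Set (V × V)}

theorem arcRel_reorient_asymm (hA : IsDAG A) (hB : B ⊆ A) {x y : V}
    (hxy : ArcRel (reorient A B) x y) : ¬ ArcRel (reorient A B) y x := by
  intro hyx
  rcases arcRel_reorient.1 hxy with ⟨hxyA, hxyB⟩ | hyxB <;>
    rcases arcRel_reorient.1 hyx with ⟨hyxA, hyxB'⟩ | hxyB'
  · exact hA.2.1 _ hxyA hyxA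
  · exact hxyB hxyB'
  · exact hyxB' hyxB
  · exact hA.2.1 _ (hB hyxB) (hB hxyB')

theorem adj_of_arcRel_reorient (hA : IsDAG A) (hB : B ⊆ A) {x y : V}
    (hxy : ArcRel (reorient A B) x y) : (undirectedGraph A).Adj x y := by
  rw [undirectedGraph, SimpleGraph.fromRel_adj]
  rcases arcRel_reorient.1 hxy with ⟨hxyA, -⟩ | hyxB
  · exact ⟨hA.1 _ hxyA, Or.inl hxyA⟩
  · exact ⟨(hA.1 _ (hB hyxB)).symm, Or.inr (hB hyxB)⟩

/-- A directed cycle through the arc `v → c` yields a path from `c` back to `v` avoiding the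
edge `vc`, so that edge is not a bridge. -/
theorem IsForestArcs.acyclicArcs_reorient (hF : IsForestArcs A) (hA : IsDAG A) (hB : B ⊆ A) :
    AcyclicArcs (reorient A B) := by
  intro v hv
  obtain ⟨c, hvc, hcv⟩ := Relation.TransGen.head'_iff.1 hv
  have hback : Relation.ReflTransGen
      (fun s t => ArcRel (reorient A B) s t ∧ (s, t) ≠ (v, c)) c v :=
    hcv.avoiding_or.elim id id
  have hbridge := SimpleGraph.isAcyclic_iff_forall_adj_isBridge.1 hF
    (adj_of_arcRel_reorient hA hB hvc)
  refine SimpleGraph.isBridge_iff.1 hbridge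
    ((SimpleGraph.reachable_iff_reflTransGen _ _).2 (Relation.ReflTransGen.mono ?_ _ _ hback)).symm
  intro s t ⟨hst, hne⟩
  rw [SimpleGraph.deleteEdges_adj, Set.mem_singleton_iff, Sym2.eq_iff]
  refine ⟨adj_of_arcRel_reorient hA hB hst, ?_⟩
  rintro (⟨rfl, rfl⟩ | ⟨rfl, rfl⟩)
  · exact hne rfl
  · exact arcRel_reorient_asymm hA hB hst hvc

theorem isForestArcs_of_forall_acyclicArcs_reorient
    (h : ∀ B ⊆ A, AcyclicArcs (reorient A B)) : IsForestArcs A := by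
  intro v c hc
  let B : Set (V × V) := {p ∈ A | ∃ d ∈ c.darts, p = (d.snd, d.fst)}
  have hdart : ∀ d ∈ c.darts, ArcRel (reorient A B) d.fst d.snd := by
    intro d hd
    obtain ⟨hne, hdA | hdA⟩ := (SimpleGraph.fromRel_adj _ _ _).1 d.adj
    · refine arcRel_reorient.2 (Or.inl ⟨hdA, ?_⟩)
      rintro ⟨-, d', hd', hdd'⟩
      obtain ⟨h₁, h₂⟩ := Prod.mk.inj hdd'
      have : d' = d := List.inj_on_of_nodup_map hc.edges_nodup hd' hd <| by
        simp [SimpleGraph.Dart.edge, h₁, h₂, Sym2.eq_swap]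
      subst this
      exact hne h₁
    · exact arcRel_reorient.2 (Or.inr ⟨hdA, d, hd, rfl⟩)
  cases c with
  | nil => exact hc.not_nil .nil
  | cons hadj p =>
    refine h B (fun p hp => hp.1) v (.head' (hdart _ List.mem_cons_self) ?_)
    exact p.reflTransGen_of_forall_dart fun d hd => hdart d (by simp [hd])

theorem isDistribLatticeOrder_of_forall_acyclicArcs_reorient
    (h : ∀ B ⊆ A, AcyclicArcs (reorient A B)) : IsDistribLatticeOrder (ARP A) :=
  letI := Subtype.distribLattice (P := ARmem A)
    (fun _ _ hs ht => ⟨Set.union_subset hs.1 ht.1, h _ (Set.union_subset hs.1 ht.1)⟩)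
    (fun _ _ hs _ => ⟨Set.inter_subset_left.trans hs.1, h _ (Set.inter_subset_left.trans hs.1)⟩)
  .of_distribLattice

end Forest

/-- The acyclic reorientation poset is a distributive lattice if
and only if the underlying undirected graph of `D` is a forest. -/
theorem stmt_11 {V : Type*} [Fintype V] (A : Set (V × V)) (hA : IsDAG A) :
    ((∀ x y : ARP A, ∃ z : ARP A, IsLUB {x, y} z) ∧
      (∀ x y : ARP A, ∃ z : ARP A, IsGLB {x, y} z) ∧
      (∀ x y z yz xyz xy xz : ARP A,
        IsGLB {y, z} yz → IsLUB {x, yz} xyz →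
        IsLUB {x, y} xy → IsLUB {x, z} xz → IsGLB {xy, xz} xyz)) ↔
    IsForestArcs A := by
  change IsDistribLatticeOrder (ARP A) ↔ IsForestArcs A
  refine ⟨fun hD => ?_, fun hF => ?_⟩
  · exact isForestArcs_of_forall_acyclicArcs_reorient fun B hB => hD.acyclicArcs_reorient hA hB
  · exact isDistribLatticeOrder_of_forall_acyclicArcs_reorient fun B hB =>
      hF.acyclicArcs_reorient hA hB
end

section
/- Let D = (V, A) be a vertebrate directed acyclic graph, so that AR(D) is a lattice. Then AR(D) is congruence normal: for every join irreducible element J of AR(D) and every meet irreducible element M of AR(D) with J ≤ M, the congruences con(J_*, J) and con(M, M^*) of AR(D) are distinct. -/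
/-- Transitive reduction: delete every arc whose endpoints are joined by a
directed path of length at least 2. -/
def transRed {V : Type*} (E : Set (V × V)) : Set (V × V) :=
  {a ∈ E | ¬ ∃ w : V, ArcRel E a.1 w ∧ Relation.TransGen (ArcRel E) w a.2}

def inducedArcs {V : Type*} (A : Set (V × V)) (U : Set V) : Set (V × V) :=
  {a ∈ A | a.1 ∈ U ∧ a.2 ∈ U}

/-- The transitive reduction of any induced subgraph is a forest. -/
def Vertebrate {V : Type*} (A : Set (V × V)) : Prop :=
  ∀ U : Set V, IsForestArcs (transRed (inducedArcs A U))

/-- A lattice congruence of the acyclic reorientation lattice: an equivalence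
relation compatible with joins (least upper bounds) and meets (greatest lower
bounds). -/
def IsCong {V : Type*} (A : Set (V × V)) (r : ARP A → ARP A → Prop) : Prop :=
  Equivalence r ∧
    (∀ x x' y y' j j' : ARP A,
      r x x' → r y y' → IsLUB {x, y} j → IsLUB {x', y'} j' → r j j') ∧
    (∀ x x' y y' m m' : ARP A,
      r x x' → r y y' → IsGLB {x, y} m → IsGLB {x', y'} m' → r m m')

/-- `con(x,y)`: the finest congruence identifying `x` and `y` (the intersection of
all congruences identifying `x` and `y`). -/
def congGen {V : Type*} (A : Set (V × V)) (x y : ARP A) : ARP A → ARP A → Prop :=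
  fun a b => ∀ r : ARP A → ARP A → Prop, IsCong A r → r x y → r a b

/-!
In an acyclic reorientation poset, a join of `x` and `y` (when it exists) reverses exactly the
arcs `c` whose tail and head are joined by a directed path of arcs reversed in `x` or `y`, and
dually for meets. Such a path only uses arcs of the support of `c`, i.e. arcs lying on directed
paths of `D` from the tail to the head of `c`. Hence for every set `S` of arcs closed under
taking supports, `B ∩ S = B' ∩ S` is a congruence. Given `J_* ⋖ J ≤ M ⋖ M^*`, choose an arc of
`(J \ J_*) ∪ (M^* \ M)` with inclusion-minimal support. If it lies in `J \ J_*`, the arcs whose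
support avoids `M^* \ M` form a support-closed set whose congruence identifies `M` and `M^*` but
separates `J_*` and `J`; the other case is symmetric.
-/

open Relation

section

variable {V : Type*} {A : Set (V × V)}

theorem AcyclicArcs.fst_ne_snd (hA : AcyclicArcs A) {c : V × V} (hc : c ∈ A) : c.1 ≠ c.2 :=
  fun h => hA c.1 (.single (show (c.1, c.1) ∈ A by rw [congrArg (Prod.mk c.1) h]; exact hc))

theorem AcyclicArcs.image_swap {E : Set (V × V)} (hE : AcyclicArcs E) :
    AcyclicArcs (Prod.swap '' E) := fun v hv =>
  hE v <| transGen_swap.mp <| TransGen.mono (fun x y ⟨d, hd, hdxy⟩ => by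
    obtain rfl : d = (y, x) := Prod.swap_eq_iff_eq_swap.mp hdxy
    exact hd) _ _ hv

theorem reorient_diff {B : Set (V × V)} (hB : B ⊆ A) :
    reorient A (A \ B) = Prod.swap '' reorient A B := by
  rw [reorient, reorient, Set.sdiff_sdiff_cancel_left hB, Set.image_union, Set.image_image]
  simp only [Prod.swap_swap, Set.image_id']
  exact Set.union_comm _ _

def forcedArcs (A Z : Set (V × V)) : Set (V × V) :=
  {d ∈ A | TransGen (ArcRel Z) d.1 d.2}

theorem forcedArcs_subset {B Z : Set (V × V)} (hB : ARmem A B) (hZB : Z ⊆ B) :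
    forcedArcs A Z ⊆ B := by
  rintro d ⟨hdA, hp⟩
  by_contra hdB
  have hfwd : ArcRel (reorient A B) d.1 d.2 := Or.inl ⟨hdA, hdB⟩
  have hback : TransGen (ArcRel (reorient A B)) d.2 d.1 :=
    transGen_swap.mpr <| TransGen.mono (fun x y hxy => Or.inr ⟨(x, y), hZB hxy, rfl⟩) _ _ hp
  exact hB.2 d.1 (.head hfwd hback)

def cutReversal (A : Set (V × V)) (P : Set V) : Set (V × V) :=
  {d ∈ A | d.1 ∈ P → d.2 ∈ P}

theorem armem_cutReversal (hA : AcyclicArcs A) (P : Set V) : ARmem A (cutReversal A P) := by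
  refine ⟨Set.sep_subset _ _, fun v hv => ?_⟩
  have step : ∀ x y, ArcRel (reorient A (cutReversal A P)) x y →
      (x ∈ P ∧ y ∉ P) ∨ ((y, x) ∈ A ∧ (y ∈ P → x ∈ P)) := by
    rintro x y (⟨hxy, hcut⟩ | ⟨d, ⟨hd, hdP⟩, hdxy⟩)
    · exact Or.inl (by simpa [cutReversal, hxy] using hcut)
    · obtain rfl : d = (y, x) := Prod.swap_eq_iff_eq_swap.mp hdxy
      exact Or.inr ⟨hd, hdP⟩
  -- no arc of the reorientation enters `P`, and the arcs leaving `P` cannot lie on a cycle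
  have path : ∀ u w, TransGen (ArcRel (reorient A (cutReversal A P))) u w →
      (u ∈ P ∧ w ∉ P) ∨ (TransGen (Function.swap (ArcRel A)) u w ∧ (w ∈ P → u ∈ P)) := by
    intro u w huw
    induction huw with
    | single h => exact (step _ _ h).imp_right fun h => ⟨.single h.1, h.2⟩
    | tail _ hbw ih =>
      rcases step _ _ hbw with ⟨hb, hw⟩ | ⟨hbw, hPwb⟩
      · exact Or.inl ⟨ih.elim (fun h => absurd hb h.2) (fun h => h.2 hb), hw⟩
      · rcases ih with ⟨hu, hb⟩ | ⟨hub, hPbu⟩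
        · exact Or.inl ⟨hu, fun hw => hb (hPwb hw)⟩
        · exact Or.inr ⟨hub.tail hbw, hPbu ∘ hPwb⟩
  rcases path v v hv with ⟨hvP, hvP'⟩ | ⟨hcyc, -⟩
  · exact hvP' hvP
  · exact hA v (transGen_swap.mp hcyc)

theorem exists_armem_superset_notMem (hA : AcyclicArcs A) {Z : Set (V × V)} (hZ : Z ⊆ A)
    {c : V × V} (hc : c ∈ A) (hnp : ¬ TransGen (ArcRel Z) c.1 c.2) :
    ∃ C, ARmem A C ∧ Z ⊆ C ∧ c ∉ C := by
  refine ⟨cutReversal A {v | ReflTransGen (ArcRel Z) c.1 v}, armem_cutReversal hA _,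
    fun d hd => ⟨hZ hd, fun h => h.tail hd⟩, fun ⟨_, hcut⟩ => ?_⟩
  rcases reflTransGen_iff_eq_or_transGen.mp (hcut .refl) with h | h
  · exact hA.fst_ne_snd hc h.symm
  · exact hnp h

theorem val_eq_forcedArcs_of_isLUB (hA : AcyclicArcs A) {x y j : ARP A}
    (h : IsLUB {x, y} j) : j.val = forcedArcs A (x.val ∪ y.val) := by
  have hxj : x ≤ j := h.1 (by simp)
  have hyj : y ≤ j := h.1 (by simp)
  refine Set.Subset.antisymm (fun d hd => ⟨j.2.1 hd, by_contra fun hnp => ?_⟩)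
    (forcedArcs_subset j.2 (Set.union_subset hxj hyj))
  obtain ⟨C, hC, hxyC, hdC⟩ :=
    exists_armem_superset_notMem hA (Set.union_subset x.2.1 y.2.1) (j.2.1 hd) hnp
  have hub : (⟨C, hC⟩ : ARP A) ∈ upperBounds {x, y} := by
    rintro _ (rfl | rfl)
    exacts [Set.subset_union_left.trans hxyC, Set.subset_union_right.trans hxyC]
  exact hdC (h.2 hub hd)

namespace ARP

def compl (B : ARP A) : ARP A :=
  ⟨A \ B.val, Set.sdiff_subset, by rw [reorient_diff B.2.1]; exact B.2.2.image_swap⟩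

theorem compl_val (B : ARP A) : B.compl.val = A \ B.val := rfl

theorem compl_compl (B : ARP A) : B.compl.compl = B :=
  Subtype.ext (Set.sdiff_sdiff_cancel_left B.2.1)

theorem compl_le_compl_iff {B C : ARP A} : B.compl ≤ C.compl ↔ C ≤ B :=
  Set.sdiff_subset_sdiff_iff_subset B.2.1 C.2.1

theorem isLUB_compl_of_isGLB {x y g : ARP A} (h : IsGLB {x, y} g) :
    IsLUB {x.compl, y.compl} g.compl := by
  refine ⟨?_, fun b hb => ?_⟩
  · rintro _ (rfl | rfl) <;> rw [compl_le_compl_iff] <;> exact h.1 (by simp)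
  · rw [← compl_compl b, compl_le_compl_iff]
    refine h.2 ?_
    rintro _ (rfl | rfl) <;> rw [← compl_le_compl_iff, compl_compl] <;> exact hb (by simp)

end ARP

def suppArcs (A : Set (V × V)) (c : V × V) : Set (V × V) :=
  {d ∈ A | ReflTransGen (ArcRel A) c.1 d.1 ∧ ReflTransGen (ArcRel A) d.2 c.2}

theorem self_mem_suppArcs {c : V × V} (hc : c ∈ A) : c ∈ suppArcs A c :=
  ⟨hc, .refl, .refl⟩

theorem suppArcs_subset_suppArcs {c d : V × V} (hd : d ∈ suppArcs A c) :
    suppArcs A d ⊆ suppArcs A c :=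
  fun _ ⟨he, h₁, h₂⟩ => ⟨he, hd.2.1.trans h₁, h₂.trans hd.2.2⟩

theorem eq_of_mem_suppArcs_of_mem_suppArcs (hA : AcyclicArcs A) {c d : V × V}
    (hcd : c ∈ suppArcs A d) (hdc : d ∈ suppArcs A c) : c = d := by
  have antisymm : ∀ {u v}, ReflTransGen (ArcRel A) u v → ReflTransGen (ArcRel A) v u → u = v :=
    fun huv hvu => (reflTransGen_iff_eq_or_transGen.mp huv).elim Eq.symm
      fun h => absurd (h.trans_left hvu) (hA _)
  exact Prod.ext (antisymm hdc.2.1 hcd.2.1) (antisymm hcd.2.2 hdc.2.2)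

theorem transGen_inter_suppArcs {Z : Set (V × V)} (hZ : Z ⊆ A) {c : V × V} {u v : V}
    (hp : TransGen (ArcRel Z) u v) (hu : ReflTransGen (ArcRel A) c.1 u)
    (hv : ReflTransGen (ArcRel A) v c.2) : TransGen (ArcRel (Z ∩ suppArcs A c)) u v := by
  induction hp with
  | single h => exact .single ⟨h, hZ h, hu, hv⟩
  | @tail b w hub hbw ih =>
    have hb : ReflTransGen (ArcRel A) c.1 b :=
      hu.trans (TransGen.mono (fun _ _ h => hZ h) _ _ hub).to_reflTransGen
    exact (ih (ReflTransGen.head (hZ hbw) hv)).tail ⟨hbw, hZ hbw, hb, hv⟩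

def SuppClosed (A S : Set (V × V)) : Prop :=
  ∀ c ∈ S, suppArcs A c ⊆ S

theorem forcedArcs_inter_of_suppClosed {S Z : Set (V × V)} (hS : SuppClosed A S) (hZ : Z ⊆ A) :
    forcedArcs A Z ∩ S = forcedArcs A (Z ∩ S) ∩ S := by
  refine Set.Subset.antisymm (fun d ⟨⟨hdA, hp⟩, hdS⟩ => ⟨⟨hdA, ?_⟩, hdS⟩)
    fun d ⟨⟨hdA, hp⟩, hdS⟩ => ⟨⟨hdA, TransGen.mono (fun _ _ h => h.1) _ _ hp⟩, hdS⟩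
  exact TransGen.mono (fun _ _ h => ⟨h.1, hS d hdS h.2⟩) _ _
    (transGen_inter_suppArcs hZ hp .refl .refl)

theorem exists_mem_forall_notMem_suppArcs [Finite V] (hA : AcyclicArcs A)
    {X Y : Set (V × V)} (hX : X ⊆ A) (hY : Y ⊆ A) (hXY : Disjoint X Y) (hne : X.Nonempty) :
    (∃ a ∈ X, ∀ b ∈ Y, b ∉ suppArcs A a) ∨ (∃ b ∈ Y, ∀ a ∈ X, a ∉ suppArcs A b) := by
  obtain ⟨c, hcW, hmin⟩ :=
    exists_minimalFor_of_wellFoundedLT (· ∈ X ∪ Y) (suppArcs A) (hne.mono Set.subset_union_left)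
  -- an arc of `X ∪ Y` in the support of `c` has the same support as `c`, hence is `c`
  have hc : ∀ e ∈ X ∪ Y, e ∈ suppArcs A c → e = c := fun e heW hec =>
    eq_of_mem_suppArcs_of_mem_suppArcs hA hec
      (hmin heW (suppArcs_subset_suppArcs hec) (self_mem_suppArcs (Set.union_subset hX hY hcW)))
  rcases hcW with hcX | hcY
  · exact .inl ⟨c, hcX, fun b hb hbc => hXY.ne_of_mem hcX hb (hc b (.inr hb) hbc).symm⟩
  · exact .inr ⟨c, hcY, fun a ha hac => hXY.ne_of_mem ha hcY (hc a (.inl ha) hac)⟩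

theorem isCong_inter_of_suppClosed (hA : AcyclicArcs A) {S : Set (V × V)}
    (hS : SuppClosed A S) : IsCong A (fun B B' => B.val ∩ S = B'.val ∩ S) := by
  have join : ∀ x x' y y' j j' : ARP A, x.val ∩ S = x'.val ∩ S → y.val ∩ S = y'.val ∩ S →
      IsLUB {x, y} j → IsLUB {x', y'} j' → j.val ∩ S = j'.val ∩ S := by
    intro x x' y y' j j' hx hy hj hj'
    rw [val_eq_forcedArcs_of_isLUB hA hj, val_eq_forcedArcs_of_isLUB hA hj',
      forcedArcs_inter_of_suppClosed hS (Set.union_subset x.2.1 y.2.1),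
      forcedArcs_inter_of_suppClosed hS (Set.union_subset x'.2.1 y'.2.1),
      Set.union_inter_distrib_right, Set.union_inter_distrib_right, hx, hy]
  have compl_inter : ∀ x x' : ARP A, x.val ∩ S = x'.val ∩ S →
      x.compl.val ∩ S = x'.compl.val ∩ S := by
    intro x x' h
    rw [ARP.compl_val, ARP.compl_val, Set.inter_sdiff_distrib_right,
      Set.inter_sdiff_distrib_right, h]
  refine ⟨⟨fun _ => rfl, Eq.symm, Eq.trans⟩, join, fun x x' y y' g g' hx hy hg hg' => ?_⟩
  rw [← ARP.compl_compl g, ← ARP.compl_compl g']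
  exact compl_inter _ _ (join _ _ _ _ _ _ (compl_inter _ _ hx) (compl_inter _ _ hy)
    (ARP.isLUB_compl_of_isGLB hg) (ARP.isLUB_compl_of_isGLB hg'))

theorem congGen_ne_of_isCong {r : ARP A → ARP A → Prop} (hr : IsCong A r) {x y u v : ARP A}
    (hxy : r x y) (huv : ¬ r u v) : congGen A x y ≠ congGen A u v := by
  intro h
  have : congGen A x y u v := h ▸ fun _ _ h => h
  exact huv (this r hr hxy)

theorem congGen_ne_of_forall_notMem_suppArcs (hA : AcyclicArcs A) {B₁ B₁' B₂ B₂' : ARP A}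
    (h₁ : B₁ ≤ B₁') {a : V × V} (ha : a ∈ B₂'.val \ B₂.val)
    (hsep : ∀ b ∈ B₁'.val \ B₁.val, b ∉ suppArcs A a) :
    congGen A B₁ B₁' ≠ congGen A B₂ B₂' := by
  set S := {c | ∀ b ∈ B₁'.val \ B₁.val, b ∉ suppArcs A c}
  have hS : SuppClosed A S := fun c hc d hdc b hb hbd =>
    hc b hb (suppArcs_subset_suppArcs hdc hbd)
  refine congGen_ne_of_isCong (isCong_inter_of_suppClosed hA hS) ?_ fun h => ?_
  · refine Set.Subset.antisymm (Set.inter_subset_inter_left S h₁) fun d ⟨hd, hdS⟩ => ⟨?_, hdS⟩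
    by_contra hd'
    exact hdS d ⟨hd, hd'⟩ (self_mem_suppArcs (B₁'.2.1 hd))
  · have : a ∈ B₂.val ∩ S := h ▸ ⟨ha.1, hsep⟩
    exact ha.2 this.1

end

theorem stmt_13_general {V : Type*} [Fintype V] (A : Set (V × V)) (hA : IsDAG A)
    (J Jst M Mst : ARP A) (hJ : Jst ⋖ J) (hM : M ⋖ Mst) (hJM : J ≤ M) :
    congGen A Jst J ≠ congGen A M Mst := by
  have hdisj : Disjoint (J.val \ Jst.val) (Mst.val \ M.val) :=
    Set.disjoint_left.mpr fun _ ha hb => hb.2 (hJM ha.1)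
  rcases exists_mem_forall_notMem_suppArcs hA.2.2 (fun _ ha => J.2.1 ha.1)
      (fun _ hb => Mst.2.1 hb.1) hdisj (Set.nonempty_of_ssubset hJ.lt) with
    ⟨a, ha, hsep⟩ | ⟨b, hb, hsep⟩
  · exact (congGen_ne_of_forall_notMem_suppArcs hA.2.2 hM.le ha hsep).symm
  · exact congGen_ne_of_forall_notMem_suppArcs hA.2.2 hJ.le hb hsep

/-- The acyclic reorientation lattice of a vertebrate directed
acyclic graph is congruence normal. -/
theorem stmt_13 {V : Type*} [Fintype V] (A : Set (V × V)) (hA : IsDAG A)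
    (hV : Vertebrate A) (J Jst M Mst : ARP A)
    (hJ : Jst ⋖ J) (hJu : ∀ C : ARP A, C ⋖ J → C = Jst)
    (hM : M ⋖ Mst) (hMu : ∀ C : ARP A, M ⋖ C → C = Mst)
    (hJM : J ≤ M) :
    congGen A Jst J ≠ congGen A M Mst :=
  stmt_13_general A hA J Jst M Mst hJ hM hJM
end
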